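/- (Theorem 2) Under Assumptions 1 and 2, define δ₁ := C₀C₁/m² + C₂/m, δ₂ := C₀²C₁/(2m³) + C₀C₂/m² + C₃/(2m), Q := 2m/C₁, and σ := 1 + h·δ₁. Let c > 0 be any constant. If the sampling period satisfies h ≤ min{1, [Q^{2τ−1}·c / ((1+δ₁)·c + δ₂)^{2τ}]^{1/(4τ−2)}}, and the initial error satisfies ‖x₀ − x*(t₀)‖ ≤ c·h², then the NTT iterates satisfy, for all k ≥ 1: ‖x_k − x*(t_k)‖ ≤ Q^{−(2τ−1)}·(σc + δ₂)^{2τ}·h^{4τ}. -/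

import Mathlib

/-!
The prediction step is a first-order Taylor step along the optimal trajectory, whose velocity is
`-[∇ₓₓf]⁻¹ ∇_{tx}f`: if `‖y - x*(t)‖ ≤ e`, the predicted point lies within
`r = (1 + hδ₁) e + δ₂ h²` of `x*(t + h)`, where `δ₁` is a Lipschitz constant of the prediction
direction and `δ₂ h²` bounds the Taylor remainder of `x*`. Each Newton step squares the error up to
the factor `Q⁻¹ = C₁ / (2m)`, so `τ` correction steps leave at most `Q^{-(2τ-1)} r^{2τ}` provided
`Q⁻¹ r ≤ 1`. The bound on `h` makes this at most `c h²`, so `‖x_k - x*(t_k)‖ ≤ c h²` propagates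
by induction.
-/

noncomputable section

/-- The setting of a time-varying, smooth, strongly convex optimization problem
`min_{x ∈ ℝⁿ} f(x;t)`, bundling the objective `f`, its derivatives, the Hessian
inverse, the optimal trajectory `x*(t)`, and Assumptions 1 and 2 of the paper. -/
structure TVOpt (n : ℕ) where
  /-- the objective `f(x;t)` -/
  f : EuclideanSpace ℝ (Fin n) → ℝ → ℝ
  /-- the gradient `∇ₓ f(x;t)` -/
  grad : EuclideanSpace ℝ (Fin n) → ℝ → EuclideanSpace ℝ (Fin n)
  /-- the Hessian `∇ₓₓ f(x;t)` -/
  hess : EuclideanSpace ℝ (Fin n) → ℝ →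
    EuclideanSpace ℝ (Fin n) →L[ℝ] EuclideanSpace ℝ (Fin n)
  /-- the Hessian inverse `[∇ₓₓ f(x;t)]⁻¹` -/
  hessInv : EuclideanSpace ℝ (Fin n) → ℝ →
    EuclideanSpace ℝ (Fin n) →L[ℝ] EuclideanSpace ℝ (Fin n)
  /-- the mixed partial derivative `∇_{tx} f(x;t)` -/
  dtgrad : EuclideanSpace ℝ (Fin n) → ℝ → EuclideanSpace ℝ (Fin n)
  /-- the third derivative tensor `∇ₓₓₓ f(x;t)` -/
  d3 : EuclideanSpace ℝ (Fin n) → ℝ →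
    EuclideanSpace ℝ (Fin n) →L[ℝ] EuclideanSpace ℝ (Fin n) →L[ℝ] EuclideanSpace ℝ (Fin n)
  /-- the time derivative of the Hessian `∇_{xtx} f(x;t)` -/
  dthess : EuclideanSpace ℝ (Fin n) → ℝ →
    EuclideanSpace ℝ (Fin n) →L[ℝ] EuclideanSpace ℝ (Fin n)
  /-- the second time derivative of the gradient `∇_{ttx} f(x;t)` -/
  dttgrad : EuclideanSpace ℝ (Fin n) → ℝ → EuclideanSpace ℝ (Fin n)
  /-- the optimal trajectory `x*(t)` -/
  xstar : ℝ → EuclideanSpace ℝ (Fin n)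
  /-- strong convexity constant -/
  m : ℝ
  /-- Hessian norm bound (gradient Lipschitz constant) -/
  L : ℝ
  C0 : ℝ
  C1 : ℝ
  C2 : ℝ
  C3 : ℝ
  m_pos : 0 < m
  grad_spec : ∀ (x : EuclideanSpace ℝ (Fin n)) (t : ℝ), HasGradientAt (fun y => f y t) (grad x t) x
  hess_spec : ∀ (x : EuclideanSpace ℝ (Fin n)) (t : ℝ), HasFDerivAt (fun y => grad y t) (hess x t) x
  dtgrad_spec : ∀ (x : EuclideanSpace ℝ (Fin n)) (t : ℝ), HasDerivAt (fun s => grad x s) (dtgrad x t) t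
  d3_spec : ∀ (x : EuclideanSpace ℝ (Fin n)) (t : ℝ), HasFDerivAt (fun y => hess y t) (d3 x t) x
  dthess_spec : ∀ (x : EuclideanSpace ℝ (Fin n)) (t : ℝ), HasDerivAt (fun s => hess x s) (dthess x t) t
  dttgrad_spec : ∀ (x : EuclideanSpace ℝ (Fin n)) (t : ℝ), HasDerivAt (fun s => dtgrad x s) (dttgrad x t) t
  /-- Assumption 1: `∇ₓₓ f(x;t) ⪰ m·I` uniformly in `x` and `t`. -/
  strong_convex : ∀ (x : EuclideanSpace ℝ (Fin n)) (t : ℝ) (v : EuclideanSpace ℝ (Fin n)),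
    m * ‖v‖ ^ 2 ≤ @inner ℝ _ _ v (hess x t v)
  hessInv_left : ∀ (x : EuclideanSpace ℝ (Fin n)) (t : ℝ), ContinuousLinearMap.comp (hessInv x t) (hess x t) =
    ContinuousLinearMap.id ℝ (EuclideanSpace ℝ (Fin n))
  hessInv_right : ∀ (x : EuclideanSpace ℝ (Fin n)) (t : ℝ), ContinuousLinearMap.comp (hess x t) (hessInv x t) =
    ContinuousLinearMap.id ℝ (EuclideanSpace ℝ (Fin n))
  /-- Assumption 2: bounded derivatives, uniformly in `x` and `t`. -/
  hess_bound : ∀ (x : EuclideanSpace ℝ (Fin n)) (t : ℝ), ‖hess x t‖ ≤ L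
  dtgrad_bound : ∀ (x : EuclideanSpace ℝ (Fin n)) (t : ℝ), ‖dtgrad x t‖ ≤ C0
  d3_bound : ∀ (x : EuclideanSpace ℝ (Fin n)) (t : ℝ), ‖d3 x t‖ ≤ C1
  dthess_bound : ∀ (x : EuclideanSpace ℝ (Fin n)) (t : ℝ), ‖dthess x t‖ ≤ C2
  dttgrad_bound : ∀ (x : EuclideanSpace ℝ (Fin n)) (t : ℝ), ‖dttgrad x t‖ ≤ C3
  /-- `x*(t)` minimizes `f(·;t)` -/
  xstar_min : ∀ t : ℝ, IsMinOn (fun x => f x t) Set.univ (xstar t)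
  /-- equivalently, `∇ₓ f(x*(t);t) = 0` -/
  xstar_grad : ∀ t : ℝ, grad (xstar t) t = 0

open Set
open scoped InnerProductSpace

theorem mul_le_of_mul_sq_le_mul {m a b : ℝ} (ha : 0 ≤ a) (hb : 0 ≤ b) (h : m * a ^ 2 ≤ a * b) :
    m * a ≤ b := by
  rcases ha.eq_or_lt with rfl | ha
  · simpa using hb
  · nlinarith

theorem norm_image_sub_le_of_norm_deriv_le_mul {F : Type*} [NormedAddCommGroup F]
    [NormedSpace ℝ F] {f f' : ℝ → F} {K b : ℝ} (hb : 0 ≤ b) (hf : ∀ r, HasDerivAt f (f' r) r)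
    (bound : ∀ r ∈ Ico 0 b, ‖f' r‖ ≤ K * r) : ‖f b - f 0‖ ≤ K / 2 * b ^ 2 := by
  have hB : ∀ r : ℝ, HasDerivAt (fun r => K / 2 * r ^ 2) (K * r) r := fun r =>
    ((hasDerivAt_pow 2 r).const_mul (K / 2)).congr_deriv (by push_cast; ring)
  exact image_norm_le_of_norm_deriv_right_le_deriv_boundary (f := fun r => f r - f 0)
    (fun r _ => ((hf r).sub_const _).continuousAt.continuousWithinAt)
    (fun r _ => ((hf r).sub_const _).hasDerivWithinAt) (by simp) hB bound ⟨hb, le_rfl⟩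

theorem dist_iterate_le_of_dist_le_mul_sq {X : Type*} [PseudoMetricSpace X] {N : X → X}
    {y z : X} {a r : ℝ} (ha : 0 ≤ a) (hN : ∀ w, dist (N w) z ≤ a * dist w z ^ 2)
    (hy : dist y z ≤ r) (har : a * r ≤ 1) {τ : ℕ} (hτ : 1 ≤ τ) :
    dist (N^[τ] y) z ≤ a ^ (2 * τ - 1) * r ^ (2 * τ) := by
  have hr : 0 ≤ r := dist_nonneg.trans hy
  obtain ⟨j, rfl⟩ := Nat.exists_eq_add_of_le' hτ
  rw [show 2 * (j + 1) - 1 = 2 * j + 1 by omega, show 2 * (j + 1) = 2 * j + 2 by ring]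
  induction j with
  | zero =>
    calc dist (N y) z ≤ a * dist y z ^ 2 := hN y
      _ ≤ a * r ^ 2 := by gcongr
      _ = a ^ 1 * r ^ 2 := by ring
  | succ j ih =>
    calc dist (N^[j + 1 + 1] y) z ≤ a * dist (N^[j + 1] y) z ^ 2 := by
          rw [Function.iterate_succ_apply']; exact hN _
      _ ≤ a * (a ^ (2 * j + 1) * r ^ (2 * j + 2)) ^ 2 := by gcongr; exact ih (by omega)
      _ = a ^ (2 * (j + 1) + 1) * r ^ (2 * (j + 1) + 2) * (a * r) ^ (2 * j) := by ring
      _ ≤ a ^ (2 * (j + 1) + 1) * r ^ (2 * (j + 1) + 2) := by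
          exact mul_le_of_le_one_right (by positivity) (pow_le_one₀ (by positivity) har)

theorem pow_mul_sq_pow_le_of_le_rpow {Q c D h : ℝ} {τ : ℕ} (hτ : 1 ≤ τ) (hQ : 0 < Q)
    (hc : 0 ≤ c) (hD : 0 < D) (hh : 0 ≤ h)
    (hsmall : h ≤ (Q ^ (2 * τ - 1) * c / D ^ (2 * τ)) ^ ((1 : ℝ) / (4 * (τ : ℝ) - 2))) :
    (Q ^ (2 * τ - 1))⁻¹ * (D * h ^ 2) ^ (2 * τ) ≤ c * h ^ 2 := by
  have hexp : ((4 * τ - 2 : ℕ) : ℝ) = 4 * (τ : ℝ) - 2 := by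
    rw [Nat.cast_sub (by omega)]; push_cast; ring
  have hpow : h ^ (4 * τ - 2) ≤ Q ^ (2 * τ - 1) * c / D ^ (2 * τ) := by
    rw [one_div, Real.le_rpow_inv_iff_of_pos hh (by positivity) (by rw [← hexp]; norm_cast; omega),
      ← hexp, Real.rpow_natCast] at hsmall
    exact hsmall
  have hsplit : (D * h ^ 2) ^ (2 * τ) = D ^ (2 * τ) * h ^ (4 * τ - 2) * h ^ 2 := by
    rw [mul_pow, ← pow_mul, mul_assoc, ← pow_add, show 2 * (2 * τ) = 4 * τ - 2 + 2 by omega]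
  calc (Q ^ (2 * τ - 1))⁻¹ * (D * h ^ 2) ^ (2 * τ)
      = D ^ (2 * τ) * h ^ (4 * τ - 2) / Q ^ (2 * τ - 1) * h ^ 2 := by rw [hsplit]; ring
    _ ≤ c * h ^ 2 := by
      gcongr
      rw [div_le_iff₀ (by positivity)]
      rw [le_div_iff₀ (by positivity)] at hpow
      linarith

theorem mul_le_one_of_pow_mul_sq_pow_le {a c D h : ℝ} {τ : ℕ} (hτ : 1 ≤ τ) (ha : 0 ≤ a)
    (hc : 0 < c) (hcD : c ≤ D) (hh : 0 < h)
    (hsmall : a ^ (2 * τ - 1) * (D * h ^ 2) ^ (2 * τ) ≤ c * h ^ 2) : a * (D * h ^ 2) ≤ 1 := by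
  have hDh : 0 < D * h ^ 2 := by have := hc.trans_le hcD; positivity
  have hs : (a * (D * h ^ 2)) ^ (2 * τ - 1) * (D * h ^ 2) ≤ 1 * (D * h ^ 2) := by
    calc (a * (D * h ^ 2)) ^ (2 * τ - 1) * (D * h ^ 2)
        = a ^ (2 * τ - 1) * (D * h ^ 2) ^ (2 * τ) := by
          rw [mul_pow, mul_assoc, ← pow_succ, Nat.sub_add_cancel (by omega)]
      _ ≤ c * h ^ 2 := hsmall
      _ ≤ 1 * (D * h ^ 2) := by rw [one_mul]; gcongr
  exact (pow_le_one_iff_of_nonneg (by positivity) (by omega)).1 (le_of_mul_le_mul_right hs hDh)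

theorem sampling_period_bounds {Q c δ₁ δ₂ h : ℝ} {τ : ℕ} (hτ : 1 ≤ τ) (hQ : 0 < Q) (hc : 0 < c)
    (hδ₁ : 0 ≤ δ₁) (hδ₂ : 0 ≤ δ₂) (hh : 0 < h)
    (hsmall : h ≤ min 1 ((Q ^ (2 * τ - 1) * c / ((1 + δ₁) * c + δ₂) ^ (2 * τ)) ^
      ((1 : ℝ) / (4 * (τ : ℝ) - 2)))) :
    Q⁻¹ * ((1 + h * δ₁) * (c * h ^ 2) + δ₂ * h ^ 2) ≤ 1 ∧
      (Q ^ (2 * τ - 1))⁻¹ * ((1 + h * δ₁) * (c * h ^ 2) + δ₂ * h ^ 2) ^ (2 * τ) ≤ c * h ^ 2 := by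
  set D := (1 + δ₁) * c + δ₂
  set r := (1 + h * δ₁) * (c * h ^ 2) + δ₂ * h ^ 2
  have hcD : c ≤ D := by nlinarith
  have hrD : r ≤ D * h ^ 2 := by
    have : h * δ₁ ≤ δ₁ := mul_le_of_le_one_left hδ₁ (hsmall.trans (min_le_left _ _))
    nlinarith [mul_le_mul_of_nonneg_right this (mul_nonneg hc.le (sq_nonneg h))]
  have hD := pow_mul_sq_pow_le_of_le_rpow hτ hQ hc.le (hc.trans_le hcD) hh.le
    (hsmall.trans (min_le_right _ _))
  have hr : 0 ≤ r := by positivity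
  refine ⟨(mul_le_mul_of_nonneg_left hrD (by positivity)).trans ?_, hD.trans' (by gcongr)⟩
  exact mul_le_one_of_pow_mul_sq_pow_le hτ (by positivity) hc hcD hh (by rwa [inv_pow])

namespace TVOpt

variable {n : ℕ} (P : TVOpt n)

local notation "E" => EuclideanSpace ℝ (Fin n)

theorem C0_nonneg : 0 ≤ P.C0 := (norm_nonneg _).trans (P.dtgrad_bound 0 0)

theorem C1_nonneg : 0 ≤ P.C1 := (norm_nonneg (P.d3 0 0)).trans (P.d3_bound 0 0)

theorem C2_nonneg : 0 ≤ P.C2 := (norm_nonneg _).trans (P.dthess_bound 0 0)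

theorem C3_nonneg : 0 ≤ P.C3 := (norm_nonneg _).trans (P.dttgrad_bound 0 0)

theorem hess_hessInv_apply (x : E) (t : ℝ) (v : E) : P.hess x t (P.hessInv x t v) = v :=
  DFunLike.congr_fun (P.hessInv_right x t) v

theorem hessInv_hess_apply (x : E) (t : ℝ) (v : E) : P.hessInv x t (P.hess x t v) = v :=
  DFunLike.congr_fun (P.hessInv_left x t) v

theorem norm_hessInv_apply_le (x : E) (t : ℝ) (v : E) : ‖P.hessInv x t v‖ ≤ ‖v‖ / P.m := by
  rw [le_div_iff₀ P.m_pos, mul_comm]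
  refine mul_le_of_mul_sq_le_mul (norm_nonneg _) (norm_nonneg v) ?_
  calc P.m * ‖P.hessInv x t v‖ ^ 2 ≤ ⟪P.hessInv x t v, v⟫_ℝ := by
        simpa only [hess_hessInv_apply] using P.strong_convex x t (P.hessInv x t v)
    _ ≤ ‖P.hessInv x t v‖ * ‖v‖ := real_inner_le_norm _ _

theorem norm_hess_sub_le_space (t : ℝ) (x y : E) :
    ‖P.hess y t - P.hess x t‖ ≤ P.C1 * ‖y - x‖ :=
  convex_univ.norm_image_sub_le_of_norm_hasFDerivWithin_le
    (fun z _ => (P.d3_spec z t).hasFDerivWithinAt) (fun z _ => P.d3_bound z t) trivial trivial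

theorem norm_hess_sub_le_time (x : E) (s t : ℝ) :
    ‖P.hess x t - P.hess x s‖ ≤ P.C2 * ‖t - s‖ :=
  convex_univ.norm_image_sub_le_of_norm_hasDerivWithin_le
    (fun r _ => (P.dthess_spec x r).hasDerivWithinAt) (fun r _ => P.dthess_bound x r)
    trivial trivial

theorem norm_dtgrad_sub_le_time (x : E) (s t : ℝ) :
    ‖P.dtgrad x t - P.dtgrad x s‖ ≤ P.C3 * ‖t - s‖ :=
  convex_univ.norm_image_sub_le_of_norm_hasDerivWithin_le
    (fun r _ => (P.dttgrad_spec x r).hasDerivWithinAt) (fun r _ => P.dttgrad_bound x r)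
    trivial trivial

theorem hasDerivAt_grad_line (t : ℝ) (x d : E) (r : ℝ) :
    HasDerivAt (fun r : ℝ => P.grad (x + r • d) t) (P.hess (x + r • d) t d) r := by
  have hline : HasDerivAt (fun r : ℝ => x + r • d) d r := by
    simpa using ((hasDerivAt_id r).smul_const d).const_add x
  exact (P.hess_spec (x + r • d) t).comp_hasDerivAt r hline

theorem norm_grad_sub_sub_hess_le (t : ℝ) (x y : E) :
    ‖P.grad y t - P.grad x t - P.hess x t (y - x)‖ ≤ P.C1 / 2 * ‖y - x‖ ^ 2 := by
  set d := y - x with hd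
  have hf : ∀ r : ℝ, HasDerivAt (fun r : ℝ => P.grad (x + r • d) t - r • P.hess x t d)
      (P.hess (x + r • d) t d - P.hess x t d) r := fun r =>
    (P.hasDerivAt_grad_line t x d r).sub
      (((hasDerivAt_id r).smul_const (P.hess x t d)).congr_deriv (one_smul ℝ _))
  have bound : ∀ r ∈ Ico (0 : ℝ) 1,
      ‖P.hess (x + r • d) t d - P.hess x t d‖ ≤ P.C1 * ‖d‖ ^ 2 * r := by
    rintro r ⟨hr, -⟩
    calc ‖P.hess (x + r • d) t d - P.hess x t d‖
        ≤ ‖P.hess (x + r • d) t - P.hess x t‖ * ‖d‖ :=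
          (P.hess (x + r • d) t - P.hess x t).le_opNorm d
      _ ≤ P.C1 * ‖(x + r • d) - x‖ * ‖d‖ := by gcongr; exact P.norm_hess_sub_le_space t _ _
      _ = P.C1 * ‖d‖ ^ 2 * r := by
          rw [add_sub_cancel_left, norm_smul, Real.norm_of_nonneg hr]; ring
  have key := norm_image_sub_le_of_norm_deriv_le_mul zero_le_one hf bound
  rw [one_smul, one_smul, zero_smul, zero_smul, add_zero, sub_zero, one_pow, mul_one, hd,
    add_sub_cancel, sub_right_comm] at key
  rw [hd]
  exact key.trans_eq (by ring)

theorem hasDerivAt_grad_time_shift (x : E) (t s : ℝ) :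
    HasDerivAt (fun s : ℝ => P.grad x (t + s)) (P.dtgrad x (t + s)) s := by
  have hline : HasDerivAt (fun s : ℝ => t + s) 1 s := by
    simpa using (hasDerivAt_id s).const_add t
  have := (P.dtgrad_spec x (t + s)).scomp s hline
  rwa [one_smul] at this

theorem norm_grad_add_sub_sub_smul_dtgrad_le (x : E) (t : ℝ) {h : ℝ} (hh : 0 ≤ h) :
    ‖P.grad x (t + h) - P.grad x t - h • P.dtgrad x t‖ ≤ P.C3 / 2 * h ^ 2 := by
  have hf : ∀ s : ℝ, HasDerivAt (fun s : ℝ => P.grad x (t + s) - s • P.dtgrad x t)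
      (P.dtgrad x (t + s) - P.dtgrad x t) s := fun s =>
    (P.hasDerivAt_grad_time_shift x t s).sub
      (((hasDerivAt_id s).smul_const (P.dtgrad x t)).congr_deriv (one_smul ℝ _))
  have bound : ∀ s ∈ Ico (0 : ℝ) h, ‖P.dtgrad x (t + s) - P.dtgrad x t‖ ≤ P.C3 * s := by
    rintro s ⟨hs, -⟩
    simpa [Real.norm_of_nonneg hs] using P.norm_dtgrad_sub_le_time x t (t + s)
  have key := norm_image_sub_le_of_norm_deriv_le_mul hh hf bound
  rwa [zero_smul, add_zero, sub_zero, sub_right_comm] at key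

theorem norm_grad_sub_grad_sub_le (x y : E) (s u : ℝ) :
    ‖(P.grad y u - P.grad x u) - (P.grad y s - P.grad x s)‖ ≤ P.C2 * ‖u - s‖ * ‖y - x‖ := by
  have := convex_univ.norm_image_sub_le_of_norm_hasFDerivWithin_le
    (f := fun z => P.grad z u - P.grad z s)
    (fun z _ => ((P.hess_spec z u).sub (P.hess_spec z s)).hasFDerivWithinAt)
    (fun z _ => P.norm_hess_sub_le_time z s u) (mem_univ x) (mem_univ y)
  rwa [sub_sub_sub_comm]

-- Without symmetry of mixed partials, the `x`-Lipschitz bound on `∇_{tx}f` comes from the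
-- `t`-Lipschitz bound on differences of gradients.
theorem norm_dtgrad_sub_le_space (t : ℝ) (x y : E) :
    ‖P.dtgrad y t - P.dtgrad x t‖ ≤ P.C2 * ‖y - x‖ :=
  ((P.dtgrad_spec y t).sub (P.dtgrad_spec x t)).le_of_lip'
    (mul_nonneg P.C2_nonneg (norm_nonneg _))
    (Filter.Eventually.of_forall fun u => by
      simpa only [Pi.sub_apply, mul_right_comm] using P.norm_grad_sub_grad_sub_le x y t u)

theorem inner_grad_sub_grad_ge (t : ℝ) (x y : E) :
    P.m * ‖y - x‖ ^ 2 ≤ ⟪y - x, P.grad y t - P.grad x t⟫_ℝ := by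
  set d := y - x
  set φ : ℝ → ℝ := fun s => ⟪d, P.grad (x + s • d) t⟫_ℝ - s * (P.m * ‖d‖ ^ 2)
  have hφ : ∀ s, HasDerivAt φ (⟪d, P.hess (x + s • d) t d⟫_ℝ - P.m * ‖d‖ ^ 2) s := fun s =>
    (((innerSL ℝ d).hasFDerivAt.comp_hasDerivAt s (P.hasDerivAt_grad_line t x d s))).sub
      (((hasDerivAt_id s).mul_const _).congr_deriv (one_mul _))
  have hmono : Monotone φ := monotone_of_deriv_nonneg (fun s => (hφ s).differentiableAt)
    fun s => by
      rw [(hφ s).deriv, sub_nonneg]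
      exact P.strong_convex (x + s • d) t d
  have h01 := hmono zero_le_one
  simp only [φ, zero_smul, add_zero, zero_mul, sub_zero, one_smul, one_mul, d,
    add_sub_cancel] at h01
  rw [inner_sub_right]
  linarith

theorem mul_norm_sub_le_norm_grad_sub (t : ℝ) (x y : E) :
    P.m * ‖y - x‖ ≤ ‖P.grad y t - P.grad x t‖ :=
  mul_le_of_mul_sq_le_mul (norm_nonneg _) (norm_nonneg _)
    ((P.inner_grad_sub_grad_ge t x y).trans (real_inner_le_norm _ _))

theorem mul_norm_sub_xstar_le_norm_grad (t : ℝ) (y : E) :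
    P.m * ‖y - P.xstar t‖ ≤ ‖P.grad y t‖ := by
  simpa [P.xstar_grad t] using P.mul_norm_sub_le_norm_grad_sub t (P.xstar t) y

def δ₁ : ℝ := P.C0 * P.C1 / P.m ^ 2 + P.C2 / P.m

def δ₂ : ℝ := P.C0 ^ 2 * P.C1 / (2 * P.m ^ 3) + P.C0 * P.C2 / P.m ^ 2 + P.C3 / (2 * P.m)

theorem δ₁_nonneg : 0 ≤ P.δ₁ := by
  have := P.m_pos; have := P.C0_nonneg; have := P.C1_nonneg; have := P.C2_nonneg
  unfold δ₁; positivity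

theorem δ₂_nonneg : 0 ≤ P.δ₂ := by
  have := P.m_pos; have := P.C0_nonneg; have := P.C1_nonneg; have := P.C2_nonneg
  have := P.C3_nonneg
  unfold δ₂; positivity

def newtonStep (t : ℝ) (y : E) : E := y - P.hessInv y t (P.grad y t)

theorem norm_newtonStep_sub_xstar_le (t : ℝ) (y : E) :
    ‖P.newtonStep t y - P.xstar t‖ ≤ P.C1 / (2 * P.m) * ‖y - P.xstar t‖ ^ 2 := by
  set z := P.xstar t
  have hid : P.newtonStep t y - z
      = P.hessInv y t (P.grad z t - P.grad y t - P.hess y t (z - y)) := by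
    rw [map_sub, map_sub, hessInv_hess_apply, P.xstar_grad t, map_zero, newtonStep]
    abel
  calc ‖P.newtonStep t y - z‖
      ≤ ‖P.grad z t - P.grad y t - P.hess y t (z - y)‖ / P.m := hid ▸ P.norm_hessInv_apply_le ..
    _ ≤ P.C1 / 2 * ‖z - y‖ ^ 2 / P.m :=
        div_le_div_of_nonneg_right (P.norm_grad_sub_sub_hess_le t y z) P.m_pos.le
    _ = P.C1 / (2 * P.m) * ‖y - z‖ ^ 2 := by rw [norm_sub_rev]; field_simp

def predictionDir (y : E) (t : ℝ) : E := P.hessInv y t (P.dtgrad y t)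

def predict (t h : ℝ) (y : E) : E := y - h • P.predictionDir y t

theorem norm_predictionDir_le (y : E) (t : ℝ) : ‖P.predictionDir y t‖ ≤ P.C0 / P.m :=
  (P.norm_hessInv_apply_le y t _).trans (by gcongr; exacts [P.m_pos.le, P.dtgrad_bound y t])

theorem norm_predictionDir_sub_le (t : ℝ) (x y : E) :
    ‖P.predictionDir y t - P.predictionDir x t‖ ≤ P.δ₁ * ‖y - x‖ := by
  set w := P.predictionDir x t
  have hsplit : P.predictionDir y t - w
      = P.hessInv y t (P.dtgrad y t - P.dtgrad x t)
        + P.hessInv y t ((P.hess x t - P.hess y t) w) := by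
    have hHw : P.hess x t w = P.dtgrad x t := P.hess_hessInv_apply x t _
    rw [sub_apply, map_sub, map_sub, hessInv_hess_apply, hHw, predictionDir]
    abel
  have hdt : ‖P.hessInv y t (P.dtgrad y t - P.dtgrad x t)‖ ≤ P.C2 * ‖y - x‖ / P.m :=
    (P.norm_hessInv_apply_le y t _).trans
      (by gcongr; exacts [P.m_pos.le, P.norm_dtgrad_sub_le_space t x y])
  have hhess : ‖P.hessInv y t ((P.hess x t - P.hess y t) w)‖
      ≤ P.C1 * ‖y - x‖ * (P.C0 / P.m) / P.m := by
    refine (P.norm_hessInv_apply_le y t _).trans (div_le_div_of_nonneg_right ?_ P.m_pos.le)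
    calc ‖(P.hess x t - P.hess y t) w‖ ≤ ‖P.hess x t - P.hess y t‖ * ‖w‖ :=
          (P.hess x t - P.hess y t).le_opNorm w
      _ ≤ P.C1 * ‖y - x‖ * (P.C0 / P.m) := by
          rw [norm_sub_rev (P.hess x t)]
          have := P.C1_nonneg
          gcongr
          exacts [P.norm_hess_sub_le_space t x y, P.norm_predictionDir_le x t]
  calc ‖P.predictionDir y t - w‖ ≤ P.C2 * ‖y - x‖ / P.m + P.C1 * ‖y - x‖ * (P.C0 / P.m) / P.m :=
        hsplit ▸ (norm_add_le _ _).trans (add_le_add hdt hhess)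
    _ = P.δ₁ * ‖y - x‖ := by have := P.m_pos.ne'; unfold δ₁; field_simp; ring

theorem norm_grad_predict_xstar_le (t : ℝ) {h : ℝ} (hh : 0 ≤ h) :
    ‖P.grad (P.predict t h (P.xstar t)) (t + h)‖ ≤ P.m * (P.δ₂ * h ^ 2) := by
  set z := P.xstar t
  set p := P.predict t h z
  set u := P.predictionDir z t
  have hpz : p - z = -(h • u) := by simp only [p, predict]; abel
  have hpz_norm : ‖p - z‖ ≤ h * (P.C0 / P.m) := by
    rw [hpz, norm_neg, norm_smul, Real.norm_of_nonneg hh]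
    gcongr; exact P.norm_predictionDir_le z t
  -- The first-order terms cancel because `∇ₓf(z;t) = 0` and `∇ₓₓf(z;t) (p - z) = -h ∇_{tx}f(z;t)`.
  have hdecomp : P.grad p (t + h)
      = (P.grad p (t + h) - P.grad z (t + h) - P.hess z (t + h) (p - z))
        + (P.hess z (t + h) - P.hess z t) (p - z)
        + (P.grad z (t + h) - P.grad z t - h • P.dtgrad z t) := by
    have hHt : P.hess z t (p - z) = -(h • P.dtgrad z t) := by
      rw [hpz, map_neg, map_smul]
      exact congrArg (fun v => -(h • v)) (P.hess_hessInv_apply z t _)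
    rw [sub_apply, hHt, P.xstar_grad t]
    abel
  have hspace : ‖P.grad p (t + h) - P.grad z (t + h) - P.hess z (t + h) (p - z)‖
      ≤ P.C1 / 2 * (h * (P.C0 / P.m)) ^ 2 := by
    have := P.C1_nonneg
    refine (P.norm_grad_sub_sub_hess_le (t + h) z p).trans ?_
    gcongr
  have htime : ‖(P.hess z (t + h) - P.hess z t) (p - z)‖ ≤ P.C2 * h * (h * (P.C0 / P.m)) := by
    refine ((P.hess z (t + h) - P.hess z t).le_opNorm _).trans ?_
    have := P.C2_nonneg
    gcongr
    simpa [Real.norm_of_nonneg hh] using P.norm_hess_sub_le_time z t (t + h)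
  have hdt := P.norm_grad_add_sub_sub_smul_dtgrad_le z t hh
  calc ‖P.grad p (t + h)‖
      ≤ P.C1 / 2 * (h * (P.C0 / P.m)) ^ 2 + P.C2 * h * (h * (P.C0 / P.m)) + P.C3 / 2 * h ^ 2 :=
        hdecomp ▸ (norm_add₃_le).trans (add_le_add (add_le_add hspace htime) hdt)
    _ = P.m * (P.δ₂ * h ^ 2) := by have := P.m_pos.ne'; unfold δ₂; field_simp

theorem norm_predict_xstar_sub_le (t : ℝ) {h : ℝ} (hh : 0 ≤ h) :
    ‖P.predict t h (P.xstar t) - P.xstar (t + h)‖ ≤ P.δ₂ * h ^ 2 :=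
  le_of_mul_le_mul_left ((P.mul_norm_sub_xstar_le_norm_grad (t + h) _).trans
    (P.norm_grad_predict_xstar_le t hh)) P.m_pos

theorem norm_predict_sub_xstar_le (t : ℝ) {h : ℝ} (hh : 0 ≤ h) (y : E) :
    ‖P.predict t h y - P.xstar (t + h)‖ ≤ (1 + h * P.δ₁) * ‖y - P.xstar t‖ + P.δ₂ * h ^ 2 := by
  set z := P.xstar t
  have hsplit : P.predict t h y - P.xstar (t + h)
      = ((y - z) - h • (P.predictionDir y t - P.predictionDir z t))
        + (P.predict t h z - P.xstar (t + h)) := by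
    simp only [predict, smul_sub]; abel
  have hy : ‖(y - z) - h • (P.predictionDir y t - P.predictionDir z t)‖
      ≤ (1 + h * P.δ₁) * ‖y - z‖ :=
    calc ‖(y - z) - h • (P.predictionDir y t - P.predictionDir z t)‖
        ≤ ‖y - z‖ + h * ‖P.predictionDir y t - P.predictionDir z t‖ :=
          (norm_sub_le _ _).trans_eq (by rw [norm_smul, Real.norm_of_nonneg hh])
      _ ≤ ‖y - z‖ + h * (P.δ₁ * ‖y - z‖) := by gcongr; exact P.norm_predictionDir_sub_le t z y
      _ = (1 + h * P.δ₁) * ‖y - z‖ := by ring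
  rw [hsplit]
  exact (norm_add_le _ _).trans (add_le_add hy (P.norm_predict_xstar_sub_le t hh))

def nttStep (t h : ℝ) (τ : ℕ) (y : E) : E := (P.newtonStep (t + h))^[τ] (P.predict t h y)

theorem norm_nttStep_sub_xstar_le {t h e : ℝ} (hh : 0 ≤ h) {τ : ℕ} (hτ : 1 ≤ τ) {y : E}
    (hy : ‖y - P.xstar t‖ ≤ e)
    (hsmall : P.C1 / (2 * P.m) * ((1 + h * P.δ₁) * e + P.δ₂ * h ^ 2) ≤ 1) :
    ‖P.nttStep t h τ y - P.xstar (t + h)‖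
      ≤ (P.C1 / (2 * P.m)) ^ (2 * τ - 1) * ((1 + h * P.δ₁) * e + P.δ₂ * h ^ 2) ^ (2 * τ) := by
  have hpred : dist (P.predict t h y) (P.xstar (t + h)) ≤ (1 + h * P.δ₁) * e + P.δ₂ * h ^ 2 := by
    have := P.δ₁_nonneg
    rw [dist_eq_norm]
    exact (P.norm_predict_sub_xstar_le t hh y).trans (by gcongr)
  rw [← dist_eq_norm]
  exact dist_iterate_le_of_dist_le_mul_sq (div_nonneg P.C1_nonneg (by linarith [P.m_pos]))
    (fun w => by simpa only [dist_eq_norm] using P.norm_newtonStep_sub_xstar_le (t + h) w)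
    hpred hsmall hτ

end TVOpt

/-- **Theorem 2.** Local convergence of Newton trajectory tracking (NTT):
if the sampling period and the initial error are small enough, the tracking error is
`O(h^(4τ))`. -/
theorem ntt_convergence (n : ℕ) (P : TVOpt n) (h : ℝ) (hh : 0 < h)
    (τ : ℕ) (hτ : 1 ≤ τ) (hC1 : 0 < P.C1) (c : ℝ) (hc : 0 < c)
    (δ1 δ2 Q σ : ℝ)
    (hδ1 : δ1 = P.C0 * P.C1 / P.m ^ 2 + P.C2 / P.m)
    (hδ2 : δ2 = P.C0 ^ 2 * P.C1 / (2 * P.m ^ 3) + P.C0 * P.C2 / P.m ^ 2 + P.C3 / (2 * P.m))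
    (hQ : Q = 2 * P.m / P.C1)
    (hσ : σ = 1 + h * δ1)
    (x : ℕ → EuclideanSpace ℝ (Fin n))
    (hrec : ∀ k : ℕ, x (k + 1) =
      (fun y => y - P.hessInv y (((k : ℝ) + 1) * h) (P.grad y (((k : ℝ) + 1) * h)))^[τ]
        (x k - h • P.hessInv (x k) ((k : ℝ) * h) (P.dtgrad (x k) ((k : ℝ) * h))))
    (hsmall : h ≤ min 1 ((Q ^ (2 * τ - 1) * c / ((1 + δ1) * c + δ2) ^ (2 * τ)) ^
      ((1 : ℝ) / (4 * (τ : ℝ) - 2))))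
    (hinit : ‖x 0 - P.xstar 0‖ ≤ c * h ^ 2) :
    ∀ k : ℕ, 1 ≤ k →
      ‖x k - P.xstar ((k : ℝ) * h)‖ ≤
        (Q ^ (2 * τ - 1))⁻¹ * (σ * c + δ2) ^ (2 * τ) * h ^ (4 * τ) := by
  have hQinv : P.C1 / (2 * P.m) = Q⁻¹ := by rw [hQ, inv_div]
  have hδ₁ : P.δ₁ = δ1 := hδ1.symm
  have hδ₂ : P.δ₂ = δ2 := hδ2.symm
  obtain ⟨hQr, hT⟩ := sampling_period_bounds hτ (hQ ▸ div_pos (mul_pos two_pos P.m_pos) hC1) hc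
    (hδ₁ ▸ P.δ₁_nonneg) (hδ₂ ▸ P.δ₂_nonneg) hh hsmall
  have hntt : ∀ k : ℕ, x (k + 1) = P.nttStep (k * h) h τ (x k) := fun k => by
    rw [hrec k, add_one_mul]; rfl
  have hstep : ∀ k : ℕ, ‖x k - P.xstar (k * h)‖ ≤ c * h ^ 2 →
      ‖x (k + 1) - P.xstar ((k + 1 : ℕ) * h)‖
        ≤ (Q ^ (2 * τ - 1))⁻¹ * ((1 + h * δ1) * (c * h ^ 2) + δ2 * h ^ 2) ^ (2 * τ) := by
    intro k hk
    rw [hntt k, Nat.cast_succ, add_one_mul, ← inv_pow, ← hQinv, ← hδ₁, ← hδ₂]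
    exact P.norm_nttStep_sub_xstar_le hh.le hτ hk (by rwa [hQinv, hδ₁, hδ₂])
  have hclose : ∀ k : ℕ, ‖x k - P.xstar (k * h)‖ ≤ c * h ^ 2 := by
    intro k
    induction k with
    | zero => simpa using hinit
    | succ k ih => exact (hstep k ih).trans hT
  intro k hk
  obtain ⟨k, rfl⟩ := Nat.exists_eq_add_of_le' hk
  refine (hstep k (hclose k)).trans_eq ?_
  rw [hσ, show (1 + h * δ1) * (c * h ^ 2) + δ2 * h ^ 2 = ((1 + h * δ1) * c + δ2) * h ^ 2 by ring,
    mul_pow, ← pow_mul]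
  ring
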